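/- arXiv:math/0108157 — 3 statements merged into one kernel-verified Lean document; each statement's English description precedes it below -/
import Mathlib

section
/- Let Γ be a finitely generated group and let H ≤ Γ be a subgroup of finite index. If H is finitely generated and has uniform exponential growth, then Γ has uniform exponential growth. -/
open Filter

/-- The ball of radius `n` in the word metric on a group with respect to a finite set `S`:
the set of elements expressible as a product of at most `n` elements of `S ∪ S⁻¹`. -/
def wordBall {G : Type*} [Group G] (S : Finset G) (n : ℕ) : Set G :=
  {x | ∃ l : List G, l.length ≤ n ∧ (∀ y ∈ l, y ∈ S ∨ y⁻¹ ∈ S) ∧ l.prod = x}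

/-- `S` is a (finite) generating set of the group `G`. -/
def Generates {G : Type*} [Group G] (S : Finset G) : Prop :=
  Subgroup.closure (S : Set G) = ⊤

/-- The growth rate `ω_S = lim_{n → ∞} |B_S(n)|^{1/n}` of a group with respect to a finite
generating set `S`.  (The limit exists by submultiplicativity, so it coincides with the
`limsup`, which we use to define it.) -/
noncomputable def growthRate {G : Type*} [Group G] (S : Finset G) : ℝ :=
  limsup (fun n : ℕ => (Nat.card (wordBall S n) : ℝ) ^ (1 / (n : ℝ))) atTop

/-- A group has exponential growth if `ω_S > 1` for some (equivalently, any) finite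
generating set `S`. -/
def HasExponentialGrowth (G : Type*) [Group G] : Prop :=
  ∃ S : Finset G, Generates S ∧ 1 < growthRate S

/-- A group has uniform exponential growth if `inf_S ω_S > 1`, the infimum being taken over
all finite generating sets `S`. -/
def HasUniformExponentialGrowth (G : Type*) [Group G] : Prop :=
  1 < ⨅ S : {S : Finset G // Generates S}, growthRate S.1

open scoped Pointwise

set_option linter.unusedSectionVars false

section Aux

variable {G : Type*} [Group G] [DecidableEq G]

lemma one_mem_wordBall (S : Finset G) (n : ℕ) : (1 : G) ∈ wordBall S n :=
  ⟨[], by simp⟩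

lemma wordBall_mono (S : Finset G) {m n : ℕ} (h : m ≤ n) : wordBall S m ⊆ wordBall S n :=
  fun _ ⟨l, hl, hm, hp⟩ => ⟨l, hl.trans h, hm, hp⟩

lemma mul_mem_wordBall {S : Finset G} {x y : G} {m n : ℕ}
    (hx : x ∈ wordBall S m) (hy : y ∈ wordBall S n) : x * y ∈ wordBall S (m + n) := by
  obtain ⟨l₁, hl₁, hm₁, rfl⟩ := hx
  obtain ⟨l₂, hl₂, hm₂, rfl⟩ := hy
  exact ⟨l₁ ++ l₂, by simpa using Nat.add_le_add hl₁ hl₂,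
    fun y hy => ((List.mem_append).1 hy).elim (hm₁ y) (hm₂ y), (List.prod_append)⟩

lemma inv_mem_wordBall {S : Finset G} {x : G} {n : ℕ}
    (hx : x ∈ wordBall S n) : x⁻¹ ∈ wordBall S n := by
  obtain ⟨l, hl, hm, rfl⟩ := hx
  refine ⟨(l.map fun z => z⁻¹).reverse, by simpa using hl, ?_, (List.prod_inv_reverse l).symm⟩
  intro y hy
  simp only [List.mem_reverse, List.mem_map] at hy
  obtain ⟨z, hz, rfl⟩ := hy
  rcases hm z hz with h | h
  · right; simpa using h
  · left; exact h

lemma list_prod_mem_wordBall {S : Finset G} {m : ℕ} :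
    ∀ l : List G, (∀ x ∈ l, x ∈ wordBall S m) → l.prod ∈ wordBall S (m * l.length)
  | [], _ => by simpa using one_mem_wordBall S 0
  | x :: l, h => by
    have hx := h x List.mem_cons_self
    have hl := list_prod_mem_wordBall l (fun y hy => h y (List.mem_cons_of_mem x hy))
    have := mul_mem_wordBall hx hl
    simpa [List.prod_cons, Nat.mul_succ, Nat.add_comm] using this

def fball (S : Finset G) : ℕ → Finset G
  | 0 => {1}
  | n + 1 => fball S n ∪ fball S n * (S ∪ S⁻¹)

lemma mem_union_symm_iff {S : Finset G} {y : G} : y ∈ S ∪ S⁻¹ ↔ (y ∈ S ∨ y⁻¹ ∈ S) := by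
  simp [Finset.mem_union, Finset.mem_inv']

lemma coe_fball (S : Finset G) : ∀ n : ℕ, (fball S n : Set G) = wordBall S n := by
  intro n
  induction n with
  | zero =>
    ext x
    simp only [fball, Finset.coe_singleton, Set.mem_singleton_iff]
    constructor
    · rintro rfl; exact one_mem_wordBall S 0
    · rintro ⟨l, hl, -, rfl⟩
      rw [Nat.le_zero, List.length_eq_zero_iff] at hl
      simp [hl]
  | succ n ih =>
    ext x
    simp only [fball, Finset.coe_union, Set.mem_union]
    constructor
    · rintro (hx | hx)
      · exact wordBall_mono S (Nat.le_succ n) (ih ▸ hx)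
      · rw [Finset.mem_coe, Finset.mem_mul] at hx
        obtain ⟨b, hb, u, hu, rfl⟩ := hx
        have hb' : b ∈ wordBall S n := ih ▸ hb
        obtain ⟨l, hl, hm, rfl⟩ := hb'
        exact ⟨l ++ [u], by simpa using hl, by
          intro y hy
          rcases List.mem_append.1 hy with h | h
          · exact hm y h
          · simp only [List.mem_singleton] at h
            subst h
            exact mem_union_symm_iff.1 hu, by simp⟩
    · rintro ⟨l, hl, hm, rfl⟩
      rcases l.eq_nil_or_concat with rfl | ⟨l', a, rfl⟩
      · left
        have : ∀ k, (1 : G) ∈ fball S k := by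
          intro k
          induction k with
          | zero => simp [fball]
          | succ k ihk => simp only [fball, Finset.mem_union]; exact Or.inl ihk
        simpa using (this n)
      · right
        rw [Finset.mem_coe, Finset.mem_mul]
        refine ⟨l'.prod, ?_, a, ?_, by simp⟩
        · rw [← Finset.mem_coe, ih]
          exact ⟨l', by simpa using Nat.le_of_succ_le_succ (by simpa using hl),
            fun y hy => hm y (by simp [hy]), rfl⟩
        · exact mem_union_symm_iff.2 (hm a (by simp))

lemma wordBall_finite (S : Finset G) (n : ℕ) : (wordBall S n).Finite := by
  rw [← coe_fball]; exact (fball S n).finite_toSet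

lemma natCard_wordBall_pos (S : Finset G) (n : ℕ) : 0 < Nat.card (wordBall S n) := by
  haveI := (wordBall_finite S n).to_subtype
  exact Nat.card_pos_iff.2 ⟨⟨1, one_mem_wordBall S n⟩, inferInstance⟩

lemma fball_card_le (S : Finset G) : ∀ n : ℕ, (fball S n).card ≤ ((S ∪ S⁻¹).card + 1) ^ n
  | 0 => by simp [fball]
  | n + 1 => by
    have h1 : (fball S (n + 1)).card ≤ (fball S n).card + (fball S n).card * (S ∪ S⁻¹).card := by
      refine (Finset.card_union_le _ _).trans ?_
      exact Nat.add_le_add_left (Finset.card_mul_le) _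
    calc (fball S (n + 1)).card ≤ (fball S n).card * ((S ∪ S⁻¹).card + 1) := by
            have h2 : (fball S n).card * ((S ∪ S⁻¹).card + 1)
                = (fball S n).card + (fball S n).card * (S ∪ S⁻¹).card := by ring
            rw [h2]; exact h1
      _ ≤ ((S ∪ S⁻¹).card + 1) ^ n * ((S ∪ S⁻¹).card + 1) :=
            Nat.mul_le_mul_right _ (fball_card_le S n)
      _ = ((S ∪ S⁻¹).card + 1) ^ (n + 1) := (pow_succ _ _).symm

lemma natCard_wordBall_le (S : Finset G) (n : ℕ) :
    Nat.card (wordBall S n) ≤ ((S ∪ S⁻¹).card + 1) ^ n := by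
  rw [Nat.card_coe_set_eq, ← coe_fball, Set.ncard_coe_finset]
  exact fball_card_le S n

end Aux

section Growth

variable {G : Type*} [Group G] [DecidableEq G]

noncomputable def grseq (S : Finset G) (n : ℕ) : ℝ :=
  (Nat.card (wordBall S n) : ℝ) ^ (1 / (n : ℝ))

lemma growthRate_eq (S : Finset G) : growthRate S = limsup (grseq S) atTop := rfl

lemma grseq_zero (S : Finset G) : grseq S 0 = 1 := by
  simp [grseq]

lemma one_le_grseq (S : Finset G) (n : ℕ) : 1 ≤ grseq S n := by
  apply Real.one_le_rpow
  · exact_mod_cast natCard_wordBall_pos S n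
  · positivity

lemma grseq_le (S : Finset G) (n : ℕ) : grseq S n ≤ ((S ∪ S⁻¹).card + 1 : ℝ) := by
  rcases Nat.eq_zero_or_pos n with rfl | hn
  · rw [grseq_zero]
    have : (0:ℝ) ≤ ((S ∪ S⁻¹).card : ℝ) := by positivity
    linarith
  · have hK : (1:ℝ) ≤ ((S ∪ S⁻¹).card + 1 : ℝ) := by
      have : (0:ℝ) ≤ ((S ∪ S⁻¹).card : ℝ) := by positivity
      linarith
    have hcard : (Nat.card (wordBall S n) : ℝ) ≤ (((S ∪ S⁻¹).card + 1 : ℝ)) ^ (n : ℝ) := by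
      rw [Real.rpow_natCast]
      exact_mod_cast natCard_wordBall_le S n
    calc grseq S n ≤ ((((S ∪ S⁻¹).card + 1 : ℝ)) ^ (n : ℝ)) ^ (1 / (n : ℝ)) := by
          apply Real.rpow_le_rpow (by positivity) hcard (by positivity)
      _ = ((S ∪ S⁻¹).card + 1 : ℝ) := by
          rw [← Real.rpow_mul (by linarith), mul_one_div_cancel (by exact_mod_cast hn.ne'),
            Real.rpow_one]

lemma isBoundedUnder_le_grseq (S : Finset G) : IsBoundedUnder (· ≤ ·) atTop (grseq S) :=
  isBoundedUnder_of ⟨((S ∪ S⁻¹).card + 1 : ℝ), grseq_le S⟩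

lemma isBoundedUnder_ge_grseq (S : Finset G) : IsBoundedUnder (· ≥ ·) atTop (grseq S) :=
  isBoundedUnder_of ⟨1, one_le_grseq S⟩

lemma one_le_growthRate (S : Finset G) : 1 ≤ growthRate S := by
  rw [growthRate_eq]
  exact le_limsup_of_frequently_le (Frequently.of_forall (one_le_grseq S))
    (isBoundedUnder_le_grseq S)

end Growth

section Schreier

variable {Γ : Type*} [Group Γ] [DecidableEq Γ]

lemma exists_word_of_generates {S : Finset Γ} (hS : Generates S) (g : Γ) :
    ∃ l : List Γ, (∀ y ∈ l, y ∈ S ∨ y⁻¹ ∈ S) ∧ l.prod = g := by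
  have hg : g ∈ Subgroup.closure (S : Set Γ) := hS ▸ Subgroup.mem_top g
  have hg' : g ∈ (Subgroup.closure (S : Set Γ)).toSubmonoid := hg
  rw [Subgroup.closure_toSubmonoid] at hg'
  obtain ⟨l, hl, hp⟩ := Submonoid.exists_list_of_mem_closure hg'
  refine ⟨l, fun y hy => ?_, hp⟩
  rcases hl y hy with h | h
  · exact Or.inl (by exact_mod_cast h)
  · exact Or.inr (by exact_mod_cast Set.mem_inv.1 h)

lemma covering (H : Subgroup Γ) [Finite (Γ ⧸ H)] {S : Finset Γ} (hS : Generates S)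
    (x : Γ ⧸ H) : ∃ g ∈ wordBall S H.index, (g : Γ ⧸ H) = x := by
  classical
  set C : ℕ → Set (Γ ⧸ H) := fun n => (fun g : Γ => (g : Γ ⧸ H)) '' wordBall S n with hC
  have hmono : Monotone C := fun i j hij =>
    Set.image_mono (wordBall_mono S hij)
  -- one-step stall propagation
  have hstep : ∀ n, C (n + 1) ⊆ C n → C (n + 2) ⊆ C (n + 1) := by
    intro n hstall x hx
    obtain ⟨g, ⟨l, hl, hm, rfl⟩, rfl⟩ := hx
    rcases l with _ | ⟨s, l'⟩
    · exact hmono (Nat.le_succ n) ⟨1, one_mem_wordBall S n, by simp⟩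
    · have hq : l'.prod ∈ wordBall S (n + 1) :=
        ⟨l', Nat.le_of_succ_le_succ (by simpa using hl), fun y hy => hm y (by simp [hy]), rfl⟩
      have : ((l'.prod : Γ) : Γ ⧸ H) ∈ C n := hstall ⟨l'.prod, hq, rfl⟩
      obtain ⟨g', hg', hgq⟩ := this
      have hs1 : s ∈ wordBall S 1 := ⟨[s], by simp, fun y hy => by
        simp only [List.mem_singleton] at hy
        exact hy ▸ hm s List.mem_cons_self, by simp⟩
      refine ⟨s * g', wordBall_mono S (by omega) (mul_mem_wordBall hs1 hg'), ?_⟩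
      have hH : g'⁻¹ * l'.prod ∈ H := QuotientGroup.eq.1 hgq
      have : ((s * g' : Γ) : Γ ⧸ H) = ((s * l'.prod : Γ) : Γ ⧸ H) := by
        rw [QuotientGroup.eq]
        have heq : (s * g')⁻¹ * (s * l'.prod) = g'⁻¹ * l'.prod := by group
        rw [heq]; exact hH
      simpa [List.prod_cons] using this
  -- stall forever
  have hstall_forever : ∀ n, C (n + 1) ⊆ C n → ∀ j, C j ⊆ C n := by
    intro n hstall
    have haux : ∀ j, C (n + j + 1) ⊆ C (n + j) := by
      intro j
      induction j with
      | zero => exact hstall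
      | succ j ih => exact hstep (n + j) ih
    have hle : ∀ j, C (n + j) ⊆ C n := by
      intro j
      induction j with
      | zero => exact fun x hx => hx
      | succ j ih => exact fun x hx => ih (haux j hx)
    intro j
    rcases Nat.le_total j n with h | h
    · exact hmono h
    · obtain ⟨j', rfl⟩ := Nat.exists_eq_add_of_le h
      exact hle j'
  -- union is everything
  have hunion : ∀ x : Γ ⧸ H, ∃ n, x ∈ C n := by
    intro x
    obtain ⟨g, rfl⟩ := QuotientGroup.mk_surjective x
    obtain ⟨l, hm, rfl⟩ := exists_word_of_generates hS g
    exact ⟨l.length, l.prod, ⟨l, le_rfl, hm, rfl⟩, rfl⟩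
  -- counting
  have hcount : ∀ n, C n = Set.univ ∨ n + 1 ≤ (C n).ncard := by
    intro n
    induction n with
    | zero =>
      right
      have : (C 0).Nonempty := ⟨((1 : Γ) : Γ ⧸ H), 1, one_mem_wordBall S 0, rfl⟩
      have := (Set.ncard_pos (Set.toFinite _)).2 this
      omega
    | succ n ih =>
      rcases ih with h | h
      · left
        apply Set.eq_univ_of_univ_subset
        rw [← h]
        exact hmono (Nat.le_succ n)
      · by_cases hC1 : C (n + 1) = Set.univ
        · exact Or.inl hC1
        · right
          have hne : C n ≠ C (n + 1) := by
            intro heq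
            apply hC1
            apply Set.eq_univ_of_forall
            intro x
            obtain ⟨j, hj⟩ := hunion x
            have : C j ⊆ C n := hstall_forever n (heq ▸ Set.Subset.rfl) j
            exact heq ▸ this hj
          have hss : C n ⊂ C (n + 1) := ⟨hmono (Nat.le_succ n), fun hsub => hne
            (Set.Subset.antisymm (hmono (Nat.le_succ n)) hsub)⟩
          have := Set.ncard_lt_ncard hss (Set.toFinite _)
          omega
  -- conclude at n = index
  have hfin : C H.index = Set.univ := by
    rcases hcount H.index with h | h
    · exact h
    · exfalso
      have h1 : (C H.index).ncard ≤ (Set.univ : Set (Γ ⧸ H)).ncard :=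
        Set.ncard_le_ncard (Set.subset_univ _) (Set.toFinite _)
      rw [Set.ncard_univ, ← Subgroup.index_eq_card] at h1
      omega
  have : x ∈ C H.index := hfin ▸ Set.mem_univ x
  obtain ⟨g, hg, hgx⟩ := this
  exact ⟨g, hg, hgx⟩

lemma schreier_mem (H : Subgroup Γ) {S : Finset Γ} (hS : Generates S)
    (rep : Γ ⧸ H → Γ) (hrep1 : ∀ x, ((rep x : Γ) : Γ ⧸ H) = x)
    (hrep2 : ∀ x, rep x ∈ wordBall S H.index) :
    ∀ g ∈ H, g ∈ Subgroup.closure ((H : Set Γ) ∩ wordBall S (2 * H.index + 1)) := by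
  set k := H.index
  set K := Subgroup.closure ((H : Set Γ) ∩ wordBall S (2 * k + 1)) with hK
  have hmemK : ∀ x : Γ, x ∈ H → x ∈ wordBall S (2 * k + 1) → x ∈ K :=
    fun x h1 h2 => Subgroup.subset_closure ⟨h1, h2⟩
  have hrepH : ∀ g : Γ, (rep ((g : Γ ⧸ H)))⁻¹ * g ∈ H := by
    intro g
    exact QuotientGroup.eq.1 (hrep1 ((g : Γ ⧸ H)))
  have claim : ∀ l : List Γ, (∀ y ∈ l, y ∈ S ∨ y⁻¹ ∈ S) →
      (rep ((l.prod : Γ ⧸ H)))⁻¹ * l.prod ∈ K := by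
    intro l
    induction l with
    | nil =>
      intro _
      simp only [List.prod_nil, mul_one]
      have h1 : rep (((1:Γ) : Γ ⧸ H)) ∈ H := by
        have h0 := hrepH 1
        rw [mul_one] at h0
        have h1' := H.inv_mem h0
        rwa [inv_inv] at h1'
      have h2 : rep (((1:Γ) : Γ ⧸ H)) ∈ wordBall S (2 * k + 1) :=
        wordBall_mono S (by omega) (hrep2 _)
      exact K.inv_mem (hmemK _ h1 h2)
    | cons s l' ih =>
      intro hm
      have hIH := ih (fun y hy => hm y (by simp [hy]))
      set q := l'.prod
      set r := rep ((q : Γ ⧸ H)) with hr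
      set r' := rep (((s * q : Γ) : Γ ⧸ H)) with hr'
      have hA : r'⁻¹ * (s * q) ∈ H := hrepH (s * q)
      have hB : r⁻¹ * q ∈ H := hrepH q
      have hfac : r'⁻¹ * s * r ∈ H := by
        have : r'⁻¹ * s * r = (r'⁻¹ * (s * q)) * (r⁻¹ * q)⁻¹ := by group
        rw [this]
        exact H.mul_mem hA (H.inv_mem hB)
      have hball : r'⁻¹ * s * r ∈ wordBall S (2 * k + 1) := by
        have h1 : r'⁻¹ ∈ wordBall S k := inv_mem_wordBall (hrep2 _)
        have h2 : s ∈ wordBall S 1 := ⟨[s], by simp, fun y hy => by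
          simp only [List.mem_singleton] at hy
          exact hy ▸ hm s List.mem_cons_self, by simp⟩
        have h3 : r ∈ wordBall S k := hrep2 _
        have := mul_mem_wordBall (mul_mem_wordBall h1 h2) h3
        exact wordBall_mono S (by omega) this
      have hkey : (rep (((s :: l').prod : Γ ⧸ H)))⁻¹ * (s :: l').prod
          = (r'⁻¹ * s * r) * (r⁻¹ * q) := by
        simp only [List.prod_cons]
        rw [← hr']
        group
        rfl
      rw [hkey]
      exact K.mul_mem (hmemK _ hfac hball) hIH
  intro g hg
  obtain ⟨l, hm, hp⟩ := exists_word_of_generates hS g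
  have h1 : rep ((g : Γ ⧸ H)) ∈ H := by
    have h2 := hrepH g
    have := H.mul_mem h2 (H.inv_mem hg)
    simpa [mul_assoc] using H.inv_mem this
  have h2 : rep ((g : Γ ⧸ H)) ∈ K :=
    hmemK _ h1 (wordBall_mono S (by omega) (hrep2 _))
  have h3 : (rep ((g : Γ ⧸ H)))⁻¹ * g ∈ K := by
    rw [← hp]
    exact claim l hm
  have : g = rep ((g : Γ ⧸ H)) * ((rep ((g : Γ ⧸ H)))⁻¹ * g) := by group
  rw [this]
  exact K.mul_mem h2 h3

end Schreier

/-- If a finite-index subgroup `H` of a finitely generated group `Γ` is finitely generated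
and has uniform exponential growth, then so does `Γ`. -/
theorem hasUniformExponentialGrowth_of_finiteIndex_subgroup
    {Γ : Type*} [Group Γ] (hfg : Group.FG Γ) (H : Subgroup Γ) (hidx : H.FiniteIndex)
    (hHfg : Group.FG H) (hH : HasUniformExponentialGrowth H) :
    HasUniformExponentialGrowth Γ := by
  classical
  haveI := hidx
  set k := H.index with hk
  set m := 2 * k + 1 with hm
  have hm1 : 1 ≤ m := by omega
  -- the infimum over generating sets of H
  set a : ℝ := ⨅ T : {T : Finset H // Generates T}, growthRate T.1 with ha
  have ha1 : 1 < a := hH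
  set b : ℝ := (1 + a) / 2 with hb
  have hb1 : 1 < b := by rw [hb]; linarith
  have hba : b < a := by rw [hb]; linarith
  set c : ℝ := b ^ (1 / (m : ℝ)) with hc
  have hc1 : 1 < c := by
    rw [hc]
    rw [Real.one_lt_rpow_iff_of_pos (by linarith)]
    left
    constructor
    · exact hb1
    · positivity
  have hbdd : BddBelow (Set.range fun T : {T : Finset H // Generates T} => growthRate T.1) := by
    refine ⟨1, ?_⟩
    rintro x ⟨T, rfl⟩
    exact one_le_growthRate T.1
  -- the key claim: for every generating set S of Γ, c ≤ growthRate S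
  have key : ∀ S : Finset Γ, Generates S → c ≤ growthRate S := by
    intro S hS
    -- choose representatives in the ball of radius k
    have hrep : ∀ x : Γ ⧸ H, ∃ g ∈ wordBall S k, (g : Γ ⧸ H) = x := covering H hS
    choose rep hrep2 hrep1 using hrep
    have hschreier := schreier_mem H hS rep hrep1 hrep2
    -- the finite generating set of H inside the ball of radius m
    set T : Finset H := (fball S m).preimage H.subtype
      (H.subtype_injective.injOn) with hT
    have hTball : ∀ t : H, t ∈ T → (t : Γ) ∈ wordBall S m := by
      intro t ht
      rw [hT, Finset.mem_preimage] at ht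
      rw [← coe_fball]
      exact ht
    have hTgen : Generates T := by
      have himg : H.subtype '' (T : Set H) = (H : Set Γ) ∩ wordBall S m := by
        rw [hT, Finset.coe_preimage, Set.image_preimage_eq_inter_range]
        rw [coe_fball]
        ext x
        simp only [Set.mem_inter_iff, Set.mem_range]
        constructor
        · rintro ⟨h1, ⟨y, rfl⟩⟩
          exact ⟨y.2, h1⟩
        · rintro ⟨h1, h2⟩
          exact ⟨h2, ⟨⟨x, h1⟩, rfl⟩⟩
      have hmap : (Subgroup.closure (T : Set H)).map H.subtype = H := by
        rw [MonoidHom.map_closure, himg]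
        apply le_antisymm
        · exact (Subgroup.closure_le H).2 Set.inter_subset_left
        · exact fun g hg => hschreier g hg
      have : (Subgroup.closure (T : Set H)).map H.subtype = (⊤ : Subgroup H).map H.subtype := by
        rw [hmap, ← MonoidHom.range_eq_map, H.range_subtype]
      exact Subgroup.map_injective H.subtype_injective this
    -- coercion of balls
    have hcoe : ∀ n : ℕ, ∀ h : H, h ∈ wordBall T n → (h : Γ) ∈ wordBall S (m * n) := by
      intro n h hh
      obtain ⟨l, hl, hmem, hp⟩ := hh
      have hcoeprod : (h : Γ) = (l.map (H.subtype : H →* Γ)).prod := by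
        rw [← hp]; exact map_list_prod (H.subtype : H →* Γ) l
      rw [hcoeprod]
      have hmem' : ∀ x ∈ l.map (H.subtype : H →* Γ), x ∈ wordBall S m := by
        intro x hx
        simp only [List.mem_map] at hx
        obtain ⟨y, hy, rfl⟩ := hx
        rcases hmem y hy with h1 | h1
        · exact hTball y h1
        · have := hTball y⁻¹ h1
          have h2 : (H.subtype y : Γ) = ((y⁻¹ : H) : Γ)⁻¹ := by simp
          rw [h2]
          exact inv_mem_wordBall this
      have := list_prod_mem_wordBall (l.map (H.subtype : H →* Γ)) hmem'
      refine wordBall_mono S ?_ this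
      simpa using Nat.mul_le_mul_left m hl
    -- cardinality comparison
    have hcard : ∀ n : ℕ, Nat.card (wordBall T n) ≤ Nat.card (wordBall S (m * n)) := by
      intro n
      haveI := (wordBall_finite S (m * n)).to_subtype
      refine Nat.card_le_card_of_injective
        (fun x => (⟨(x.1 : Γ), hcoe n x.1 x.2⟩ : wordBall S (m * n))) ?_
      intro x y hxy
      simp only [Subtype.mk.injEq] at hxy
      exact Subtype.ext (Subtype.ext hxy)
    -- a ≤ growthRate T
    have haT : a ≤ growthRate (T : Finset H) := by
      rw [ha]
      exact ciInf_le hbdd (⟨T, hTgen⟩ : {T : Finset H // Generates T})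
    have hbT : b < limsup (grseq T) atTop := lt_of_lt_of_le hba
      (le_trans haT (le_of_eq (growthRate_eq T)))
    have hfreq : ∃ᶠ n in atTop, b < grseq T n :=
      frequently_lt_of_lt_limsup ((isBoundedUnder_ge_grseq T).isCoboundedUnder_le) hbT
    have hfreq2 : ∃ᶠ n in atTop, c ≤ grseq S (m * n) := by
      refine hfreq.mono ?_
      intro n hn
      have hn0 : n ≠ 0 := by
        rintro rfl
        rw [grseq_zero] at hn
        linarith
      have hnR : (0 : ℝ) < (n : ℝ) := by exact_mod_cast Nat.pos_of_ne_zero hn0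
      -- b ^ n < card of wordBall T n
      have h1 : b ^ (n : ℝ) < (Nat.card (wordBall T n) : ℝ) := by
        have hlt := Real.rpow_lt_rpow (by linarith : (0:ℝ) ≤ b) hn hnR
        have hgr : grseq T n ^ (n : ℝ) = (Nat.card (wordBall T n) : ℝ) := by
          show ((Nat.card (wordBall T n) : ℝ) ^ (1 / (n:ℝ))) ^ (n:ℝ) = _
          rw [← Real.rpow_mul (by positivity), one_div_mul_cancel hnR.ne', Real.rpow_one]
        rw [hgr] at hlt
        exact hlt
      have h2 : (Nat.card (wordBall T n) : ℝ) ≤ (Nat.card (wordBall S (m * n)) : ℝ) := by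
        exact_mod_cast hcard n
      have h3 : b ^ (n : ℝ) ≤ (Nat.card (wordBall S (m * n)) : ℝ) := le_trans h1.le h2
      have h4 : (b ^ (n:ℝ)) ^ (1 / ((m * n : ℕ) : ℝ)) ≤ grseq S (m * n) := by
        rw [grseq]
        exact Real.rpow_le_rpow (by positivity) h3 (by positivity)
      have h5 : (b ^ (n:ℝ)) ^ (1 / ((m * n : ℕ) : ℝ)) = c := by
        rw [← Real.rpow_mul (by linarith : (0:ℝ) ≤ b), hc]
        congr 1
        have hmn : ((m * n : ℕ) : ℝ) = (m : ℝ) * (n : ℝ) := by push_cast; ring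
        have hmR : ((m:ℕ) : ℝ) ≠ 0 := by
          exact_mod_cast (by omega : (m:ℕ) ≠ 0)
        rw [hmn]
        field_simp
      rw [← h5]
      exact h4
    have hfreq3 : ∃ᶠ j in atTop, c ≤ grseq S j := by
      have htend : Tendsto (fun n : ℕ => m * n) atTop atTop := by
        apply tendsto_atTop_mono (fun n => ?_) tendsto_id
        calc (n : ℕ) = 1 * n := (one_mul n).symm
          _ ≤ m * n := Nat.mul_le_mul_right n hm1
      exact htend.frequently hfreq2
    rw [growthRate_eq]
    exact le_limsup_of_frequently_le hfreq3 (isBoundedUnder_le_grseq S)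
  -- conclude
  obtain ⟨F, hF⟩ := hfg.out
  haveI : Nonempty {S : Finset Γ // Generates S} := ⟨⟨F, hF⟩⟩
  exact lt_of_lt_of_le hc1 (le_ciInf fun S => key S.1 S.2)
end

section
/- Let K be a number field, let 𝒮 be a finite set of places of K containing all archimedean places, and let O_K(𝒮) be the ring of 𝒮-integers of K. Fix an algebraic closure of K and, for each ν ∈ 𝒮, an extension of the absolute value |·|_ν to this algebraic closure. Let A ∈ SL_n(O_K(𝒮)) and let λ_1, …, λ_r be the distinct eigenvalues of A (in the algebraic closure), with r ≥ 2. Then ∏_{ν∈𝒮} ∏_{i≠j} |λ_i − λ_j|_ν ≥ 1. -/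
open NumberField IsDedekindDomain Finset
open scoped NNReal

/-- The normalized `v`-adic absolute value on a number field `K` attached to a finite place
(nonzero prime ideal) `v`: it sends `x` to `(N v) ^ (-v(x))` where `N v` is the cardinality of
the residue field at `v`. -/
noncomputable def vadicAbs {K : Type*} [Field K] [NumberField K]
    (v : HeightOneSpectrum (𝓞 K)) (x : K) : ℝ :=
  (WithZeroMulInt.toNNReal
    (Nat.cast_ne_zero.mpr ((Ideal.absNorm_ne_zero_iff v.asIdeal).mpr
      (Ideal.finiteQuotientOfFreeOfNeBot v.asIdeal v.ne_bot)) :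
        ((Ideal.absNorm v.asIdeal : ℕ) : ℝ≥0) ≠ 0)
    (v.valuation K x) : ℝ≥0)


/-!
The product `D = ∏_{i ≠ j} (λᵢ - λⱼ)` is fixed by `Gal(K̄/K)`, since the Galois group permutes
the roots of the characteristic polynomial; hence `D` is an element `d` of `K`, and `d ≠ 0`
because the `λᵢ` are distinct. At a finite place `v ∉ 𝒮` the entries of `A` are `v`-integral, so
the eigenvalues are integral over the valuation ring of `v`, hence so is `d`, and `|d|_v ≤ 1`.
The product formula `∏_ν |d|_ν = 1` then gives `∏_{ν ∈ 𝒮} |d|_ν ≥ 1`.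
-/

open Polynomial

theorem Finset.prod_offDiag_univ_perm {ι M : Type*} [Fintype ι] [DecidableEq ι] [CommMonoid M]
    (e : Equiv.Perm ι) (f : ι → ι → M) :
    ∏ p ∈ (univ : Finset ι).offDiag, f (e p.1) (e p.2) =
      ∏ p ∈ (univ : Finset ι).offDiag, f p.1 p.2 :=
  prod_equiv (e.prodCongr e) (by simp [e.injective.ne_iff]) (by simp)

section Roots

variable {F L ι : Type*} [Field F] [Field L] [Algebra F L]

theorem exists_perm_apply_eq_of_roots [Finite ι] (p : F[X]) {lam : ι → L}
    (hinj : Function.Injective lam)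
    (hroots : ∀ μ : L, (∃ i, lam i = μ) ↔ (p.map (algebraMap F L)).IsRoot μ) (σ : L →ₐ[F] L) :
    ∃ τ : Equiv.Perm ι, ∀ i, σ (lam i) = lam (τ i) := by
  have hroot : ∀ i, ∃ j, lam j = σ (lam i) := fun i => by
    have hi := (hroots (lam i)).mp ⟨i, rfl⟩
    rw [IsRoot, eval_map_algebraMap] at hi
    rw [hroots, IsRoot, eval_map_algebraMap, aeval_algHom_apply, hi, map_zero]
  choose τ hτ using hroot
  have hτinj : Function.Injective τ := fun i j hij =>
    hinj <| (σ : L →+* L).injective <| by simpa only [RingHom.coe_coe, ← hτ] using congrArg lam hij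
  exact ⟨Equiv.ofBijective τ (Finite.injective_iff_bijective.mp hτinj), fun i => (hτ i).symm⟩

theorem prod_offDiag_sub_mem_range_of_roots [Fintype ι] [DecidableEq ι] [IsGalois F L]
    (p : F[X]) {lam : ι → L} (hinj : Function.Injective lam)
    (hroots : ∀ μ : L, (∃ i, lam i = μ) ↔ (p.map (algebraMap F L)).IsRoot μ) :
    ∏ q ∈ (univ : Finset ι).offDiag, (lam q.1 - lam q.2) ∈ Set.range (algebraMap F L) := by
  refine (InfiniteGalois.mem_range_algebraMap_iff_fixed _).mpr fun σ => ?_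
  obtain ⟨τ, hτ⟩ := exists_perm_apply_eq_of_roots p hinj hroots (σ : L →ₐ[F] L)
  simp only [AlgEquiv.coe_toAlgHom] at hτ
  simp only [map_prod, map_sub, hτ]
  exact prod_offDiag_univ_perm τ fun i j => lam i - lam j

end Roots

section Integrality

variable {n : Type*} [Fintype n] [DecidableEq n]

theorem Matrix.isIntegral_of_isRoot_charpoly_map {R S : Type*} [CommRing R] [CommRing S]
    [Algebra R S] (M : Matrix n n R) {μ : S} (hμ : (M.map (algebraMap R S)).charpoly.IsRoot μ) :
    IsIntegral R μ :=
  ⟨M.charpoly, M.charpoly_monic, by rwa [Matrix.charpoly_map, IsRoot, eval_map] at hμ⟩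

variable {K L Γ₀ : Type*} [Field K] [Field L] [Algebra K L] [LinearOrderedCommGroupWithZero Γ₀]

theorem Valuation.isIntegral_integer_of_isRoot_charpoly (v : Valuation K Γ₀) (M : Matrix n n K)
    (hM : ∀ i j, v (M i j) ≤ 1) {μ : L} (hμ : (M.map (algebraMap K L)).charpoly.IsRoot μ) :
    IsIntegral v.integer μ := by
  let M' : Matrix n n v.integer := Matrix.of fun i j => ⟨M i j, hM i j⟩
  have hM' : M'.map (algebraMap v.integer L) = M.map (algebraMap K L) := by ext; rfl
  exact Matrix.isIntegral_of_isRoot_charpoly_map M' (hM' ▸ hμ)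

theorem Valuation.le_one_of_isIntegral_algebraMap (v : Valuation K Γ₀) {d : K}
    (hd : IsIntegral v.integer (algebraMap K L d)) : v d ≤ 1 :=
  (Valuation.integer.integers v).mem_of_integral <|
    (isIntegral_algebraMap_iff (algebraMap K L).injective).mp hd

end Integrality

theorem finprod_le_prod_of_le_one {α R : Type*} [CommSemiring R] [PartialOrder R]
    [IsOrderedRing R] {f : α → R} (hf : f.HasFiniteMulSupport) (h0 : ∀ a, 0 ≤ f a)
    (S : Finset α) (h1 : ∀ a ∉ S, f a ≤ 1) : ∏ᶠ a, f a ≤ ∏ a ∈ S, f a := by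
  classical
  rw [finprod_eq_prod_of_mulSupport_subset f (s := S ∪ hf.toFinset)
    fun _ ha => mem_coe.mpr (mem_union_right S (hf.mem_toFinset.mpr ha)),
    ← prod_sdiff subset_union_left]
  refine mul_le_of_le_one_left (prod_nonneg fun a _ => h0 a) (prod_le_one (fun a _ => h0 a) ?_)
  intro a ha
  exact h1 a (mem_sdiff.mp ha).2

namespace NumberField

variable {K : Type*} [Field K] [NumberField K]

theorem vadicAbs_eq_adicAbv (v : HeightOneSpectrum (𝓞 K)) (x : K) :
    vadicAbs v x = HeightOneSpectrum.adicAbv K v x :=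
  rfl

theorem HeightOneSpectrum.adicAbv_le_one_iff (v : HeightOneSpectrum (𝓞 K)) {x : K} :
    HeightOneSpectrum.adicAbv K v x ≤ 1 ↔ v.valuation K x ≤ 1 := by
  rw [HeightOneSpectrum.adicAbv_def, NNReal.coe_le_one,
    WithZeroMulInt.toNNReal_le_one_iff (HeightOneSpectrum.one_lt_absNorm_nnreal v)]

theorem one_le_prod_infinitePlace_mul_prod_adicAbv {x : K} (hx : x ≠ 0)
    (S : Finset (HeightOneSpectrum (𝓞 K)))
    (hS : ∀ v ∉ S, HeightOneSpectrum.adicAbv K v x ≤ 1) :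
    1 ≤ (∏ w : InfinitePlace K, w x ^ w.mult) * ∏ v ∈ S, HeightOneSpectrum.adicAbv K v x := by
  have hfin : ∏ᶠ w : FinitePlace K, w x =
      ∏ᶠ v : HeightOneSpectrum (𝓞 K), HeightOneSpectrum.adicAbv K v x := by
    rw [← finprod_comp_equiv FinitePlace.equivHeightOneSpectrum.symm]
    simp only [FinitePlace.equivHeightOneSpectrum_symm_apply, FinitePlace.norm_embedding]
  have hsupp :
      (fun v : HeightOneSpectrum (𝓞 K) => HeightOneSpectrum.adicAbv K v x).HasFiniteMulSupport := by
    simpa only [Function.comp_def, FinitePlace.equivHeightOneSpectrum_symm_apply,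
      FinitePlace.norm_embedding] using (FinitePlace.hasFiniteMulSupport hx).comp_of_injective
        FinitePlace.equivHeightOneSpectrum.symm.injective
  rw [← prod_abs_eq_one hx, hfin]
  gcongr
  exact finprod_le_prod_of_le_one hsupp (fun v => AbsoluteValue.nonneg _ x) S hS

end NumberField

theorem one_le_prod_places_prod_eigenvalue_differences_general
    {K : Type*} [Field K] [NumberField K] {n : ℕ}
    (Sf : Finset (HeightOneSpectrum (𝓞 K)))
    (Winf : InfinitePlace K → AbsoluteValue (AlgebraicClosure K) ℝ)
    (hWinf : ∀ (w : InfinitePlace K) (x : K), Winf w (algebraMap K (AlgebraicClosure K) x) = w x)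
    (Wfin : HeightOneSpectrum (𝓞 K) → AbsoluteValue (AlgebraicClosure K) ℝ)
    (hWfin : ∀ v ∈ Sf, ∀ x : K,
      Wfin v (algebraMap K (AlgebraicClosure K) x) = vadicAbs v x)
    (A : Matrix.SpecialLinearGroup (Fin n) K)
    (hA : ∀ i j : Fin n, ∀ v : HeightOneSpectrum (𝓞 K), v ∉ Sf →
      v.valuation K ((A : Matrix (Fin n) (Fin n) K) i j) ≤ 1)
    {r : ℕ} (lam : Fin r → AlgebraicClosure K) (hinj : Function.Injective lam)
    (hroots : ∀ μ : AlgebraicClosure K, (∃ i, lam i = μ) ↔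
      (((A : Matrix (Fin n) (Fin n) K).map
        (algebraMap K (AlgebraicClosure K))).charpoly).IsRoot μ) :
    1 ≤ (∏ w : InfinitePlace K,
          ∏ p ∈ (univ : Finset (Fin r)).offDiag, (Winf w (lam p.1 - lam p.2)) ^ w.mult) *
        ∏ v ∈ Sf,
          ∏ p ∈ (univ : Finset (Fin r)).offDiag, Wfin v (lam p.1 - lam p.2) := by
  obtain ⟨d, hd⟩ := prod_offDiag_sub_mem_range_of_roots (A : Matrix (Fin n) (Fin n) K).charpoly
    hinj (by simpa only [Matrix.charpoly_map] using hroots)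
  have hd0 : d ≠ 0 := by
    rintro rfl
    refine prod_ne_zero_iff.mpr (fun p hp => ?_) (hd.symm.trans (map_zero _))
    exact sub_ne_zero.mpr (hinj.ne (mem_offDiag.mp hp).2.2)
  have hval (v : HeightOneSpectrum (𝓞 K)) (hv : v ∉ Sf) :
      HeightOneSpectrum.adicAbv K v d ≤ 1 := by
    have hlam (i : Fin r) : IsIntegral (v.valuation K).integer (lam i) :=
      (v.valuation K).isIntegral_integer_of_isRoot_charpoly _ (fun i j => hA i j v hv)
        ((hroots (lam i)).mp ⟨i, rfl⟩)
    refine (HeightOneSpectrum.adicAbv_le_one_iff v).mpr <|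
      (v.valuation K).le_one_of_isIntegral_algebraMap (L := AlgebraicClosure K) ?_
    exact hd ▸ IsIntegral.prod _ fun p _ => (hlam p.1).sub (hlam p.2)
  have hinf (w : InfinitePlace K) : ∏ p ∈ (univ : Finset (Fin r)).offDiag,
      Winf w (lam p.1 - lam p.2) ^ w.mult = w d ^ w.mult := by
    rw [prod_pow, ← map_prod, ← hd, hWinf]
  have hfin (v) (hv : v ∈ Sf) : ∏ p ∈ (univ : Finset (Fin r)).offDiag,
      Wfin v (lam p.1 - lam p.2) = HeightOneSpectrum.adicAbv K v d := by
    rw [← map_prod, ← hd, hWfin v hv, vadicAbs_eq_adicAbv]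
  rw [prod_congr rfl fun w _ => hinf w, prod_congr rfl hfin]
  exact one_le_prod_infinitePlace_mul_prod_adicAbv hd0 Sf hval

/-- **Product of eigenvalue differences of an `𝒮`-integral matrix.**
Let `K` be a number field and let `𝒮` be a finite set of places of `K` containing all the
archimedean ones, so that `𝒮` consists of all the infinite places together with a finite set
`Sf` of finite places.  For each place of `𝒮` fix an extension to the algebraic closure `L` of
`K` of the associated (suitably normalized) absolute value: for an infinite place `w` the
normalized value of `x` is `w(x) ^ mult w`, extended by `(Winf w) ^ mult w`, and for a finite
place `v ∈ Sf` the normalized value is `vadicAbs v`, extended by `Wfin v`.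
If `A ∈ SL_n(O_K(𝒮))` has distinct eigenvalues `λ_1, …, λ_r` in `L` with `r ≥ 2`, then
`∏_{ν ∈ 𝒮} ∏_{i ≠ j} |λ_i − λ_j|_ν ≥ 1`. -/
theorem one_le_prod_places_prod_eigenvalue_differences
    {K : Type*} [Field K] [NumberField K] {n : ℕ}
    (Sf : Finset (HeightOneSpectrum (𝓞 K)))
    (Winf : InfinitePlace K → AbsoluteValue (AlgebraicClosure K) ℝ)
    (hWinf : ∀ (w : InfinitePlace K) (x : K), Winf w (algebraMap K (AlgebraicClosure K) x) = w x)
    (Wfin : HeightOneSpectrum (𝓞 K) → AbsoluteValue (AlgebraicClosure K) ℝ)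
    (hWfin : ∀ v ∈ Sf, ∀ x : K,
      Wfin v (algebraMap K (AlgebraicClosure K) x) = vadicAbs v x)
    (A : Matrix.SpecialLinearGroup (Fin n) K)
    (hA : ∀ i j : Fin n, ∀ v : HeightOneSpectrum (𝓞 K), v ∉ Sf →
      v.valuation K ((A : Matrix (Fin n) (Fin n) K) i j) ≤ 1)
    {r : ℕ} (hr : 2 ≤ r) (lam : Fin r → AlgebraicClosure K) (hinj : Function.Injective lam)
    (hroots : ∀ μ : AlgebraicClosure K, (∃ i, lam i = μ) ↔
      (((A : Matrix (Fin n) (Fin n) K).map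
        (algebraMap K (AlgebraicClosure K))).charpoly).IsRoot μ) :
    1 ≤ (∏ w : InfinitePlace K,
          ∏ p ∈ (univ : Finset (Fin r)).offDiag, (Winf w (lam p.1 - lam p.2)) ^ w.mult) *
        ∏ v ∈ Sf,
          ∏ p ∈ (univ : Finset (Fin r)).offDiag, Wfin v (lam p.1 - lam p.2) :=
  one_le_prod_places_prod_eigenvalue_differences_general Sf Winf hWinf Wfin hWfin A hA lam hinj
    hroots
end

section
/- (Margulis' ping-pong lemma.) Let k be a field, n ≥ 1, and A, B ∈ GL_n(k). Suppose there exists a nonempty subset U of the projective space ℙ(k^n) such that (i) B·U ∩ U = ∅, (ii) (AB)·U ⊆ U, and (iii) (A²B)·U ⊆ U, where GL_n(k) acts on ℙ(k^n) by projectivizing the linear action on k^n. Then AB and A²B generate a free subsemigroup of GL_n(k): the semigroup homomorphism from the free semigroup on two generators to GL_n(k) sending the generators to AB and A²B is injective. -/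
/-!
Ping-pong: every positive word in the generators maps `U` into the image of `U` under its
first letter, and the two generators send `U` to disjoint sets (because
`AB·U ∩ A²B·U = A·(B·U ∩ AB·U) ⊆ A·(B·U ∩ U) = ∅`). Hence equal words have equal first letters;
cancelling them and inducting shows the words coincide, the case of words of different lengths
being excluded since no nonempty word evaluates to `1`.
-/

/-- The action of `GL_n(k)` on the projective space `ℙ(k^n)`, obtained by projectivizing the
linear action on `k^n`. -/
noncomputable def projAction {n : ℕ} {k : Type*} [Field k]
    (g : Matrix.GeneralLinearGroup (Fin n) k) :
    Projectivization k (Fin n → k) → Projectivization k (Fin n → k) :=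
  Projectivization.map
    ((Matrix.GeneralLinearGroup.toLin g).toLinearEquiv : (Fin n → k) →ₗ[k] (Fin n → k))
    (Matrix.GeneralLinearGroup.toLin g).toLinearEquiv.injective

open Pointwise

theorem projAction_image_eq_smul_set {n : ℕ} {k : Type*} [Field k]
    (g : Matrix.GeneralLinearGroup (Fin n) k) (U : Set (Projectivization k (Fin n → k))) :
    projAction g '' U = g • U :=
  rfl

namespace FreeSemigroup

section PingPong

variable {ι G X : Type*} [LeftCancelMonoid G] [MulAction G X] {f : ι → G} {U : Set X}

theorem lift_smul_set_subset_head (hmaps : ∀ i, f i • U ⊆ U) (w : FreeSemigroup ι) :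
    lift f w • U ⊆ f w.head • U := by
  induction w using FreeSemigroup.recOnMul with
  | ih1 i => rfl
  | ih2 i w _ ih =>
    rw [lift_of_mul, mul_smul]
    exact Set.smul_set_mono (ih.trans (hmaps _))

theorem head_eq_of_lift_eq (hU : U.Nonempty) (hmaps : ∀ i, f i • U ⊆ U)
    (hdisj : Pairwise fun i j => Disjoint (f i • U) (f j • U)) {w w' : FreeSemigroup ι}
    (h : lift f w = lift f w') : w.head = w'.head := by
  by_contra hne
  obtain ⟨u, hu⟩ := hU
  have hw : lift f w • u ∈ f w.head • U :=
    lift_smul_set_subset_head hmaps w (Set.smul_mem_smul_set hu)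
  have hw' : lift f w • u ∈ f w'.head • U :=
    h ▸ lift_smul_set_subset_head hmaps w' (Set.smul_mem_smul_set hu)
  exact Set.disjoint_left.1 (hdisj hne) hw hw'

theorem lift_ne_one [Nontrivial ι] (hU : U.Nonempty) (hmaps : ∀ i, f i • U ⊆ U)
    (hdisj : Pairwise fun i j => Disjoint (f i • U) (f j • U)) (w : FreeSemigroup ι) :
    lift f w ≠ 1 := by
  intro h
  -- `of i * w` and `w * of i` both evaluate to `f i`, but start with different letters.
  obtain ⟨i, hi⟩ := exists_ne w.head
  have heq : lift f (of i * w) = lift f (w * of i) := by simp [h]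
  exact hi (head_eq_of_lift_eq hU hmaps hdisj heq)

theorem injective_lift_of_ping_pong [Nontrivial ι] (hU : U.Nonempty) (hmaps : ∀ i, f i • U ⊆ U)
    (hdisj : Pairwise fun i j => Disjoint (f i • U) (f j • U)) :
    Function.Injective (lift f) := by
  have hne := lift_ne_one hU hmaps hdisj
  intro w w' h
  have hhead := head_eq_of_lift_eq hU hmaps hdisj h
  induction w using FreeSemigroup.recOnMul generalizing w' with
  | ih1 i =>
    cases w' using FreeSemigroup.recOnMul with
    | ih1 j => exact congrArg of hhead
    | ih2 j w' =>
      cases hhead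
      rw [lift_of, lift_of_mul, eq_comm, mul_eq_left] at h
      exact absurd h (hne w')
  | ih2 i w _ ih =>
    cases w' using FreeSemigroup.recOnMul with
    | ih1 j =>
      cases hhead
      rw [lift_of, lift_of_mul, mul_eq_left] at h
      exact absurd h (hne w)
    | ih2 j w' =>
      cases hhead
      rw [lift_of_mul, lift_of_mul] at h
      have htail := mul_left_cancel h
      rw [ih htail (head_eq_of_lift_eq hU hmaps hdisj htail)]

end PingPong

end FreeSemigroup

theorem Disjoint.smul_mul_smul_sq_mul {G X : Type*} [Group G] [MulAction G X] {a b : G}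
    {U : Set X} (hb : Disjoint (b • U) U) (hab : (a * b) • U ⊆ U) :
    Disjoint ((a * b) • U) ((a ^ 2 * b) • U) := by
  rw [pow_two, mul_assoc, mul_smul, mul_smul a (a * b)]
  exact Set.disjoint_smul_set.2 (hb.mono_right hab)

theorem FreeSemigroup.injective_lift_of_ping_pong_pair {G X : Type*} [Group G] [MulAction G X]
    {a b : G} {U : Set X} (hU : U.Nonempty) (hb : Disjoint (b • U) U)
    (hab : (a * b) • U ⊆ U) (ha2b : (a ^ 2 * b) • U ⊆ U) :
    Function.Injective (lift fun i : Bool => if i then a * b else a ^ 2 * b) := by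
  refine injective_lift_of_ping_pong hU (fun i => ?_) ?_
  · cases i <;> assumption
  · have hdisj := hb.smul_mul_smul_sq_mul hab
    rintro (_ | _) (_ | _) hne
    exacts [absurd rfl hne, hdisj.symm, hdisj, absurd rfl hne]

/-- **Margulis' ping-pong lemma.**  If `A, B ∈ GL_n(k)` admit a nonempty subset
`U ⊆ ℙ(k^n)` with `B·U ∩ U = ∅`, `(AB)·U ⊆ U` and `(A²B)·U ⊆ U`, then `AB` and `A²B`
generate a free subsemigroup of `GL_n(k)`. -/
theorem free_semigroup_of_ping_pong_pair
    {n : ℕ} {k : Type*} [Field k] (A B : Matrix.GeneralLinearGroup (Fin n) k)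
    (U : Set (Projectivization k (Fin n → k))) (hU : U.Nonempty)
    (h1 : projAction B '' U ∩ U = ∅)
    (h2 : projAction (A * B) '' U ⊆ U)
    (h3 : projAction (A ^ 2 * B) '' U ⊆ U) :
    Function.Injective
      (FreeSemigroup.lift (fun b : Bool => if b then A * B else A ^ 2 * B) :
        FreeSemigroup Bool →ₙ* Matrix.GeneralLinearGroup (Fin n) k) := by
  simp only [projAction_image_eq_smul_set] at h1 h2 h3
  exact FreeSemigroup.injective_lift_of_ping_pong_pair hU (Set.disjoint_iff_inter_eq_empty.2 h1)
    h2 h3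
end
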